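/- Every stable necklace of bounded ramification in ℝ^d has no cut points. -/

import Mathlib

/-!
Fix `x ∈ F`. Copies shrink geometrically, so every `y ≠ x` lies in a copy avoiding `x`, and
`F \ {x}` is the union of the copies `F_σ` with `x ∉ F_σ`. These are connected, because `F` is:
at every level consecutive copies meet at main nodes, and copies become arbitrarily small. So it
suffices to join any two avoiding copies by a chain of avoiding copies, consecutive ones meeting.

Call a child `F_{βj}` avoiding `x` of a copy `F_β ∋ x` a port of `β`. At most two children of
`F_β`, and adjacent ones, contain `x`: three would force all main nodes to coincide, and stability
then makes that node a common fixed point of the `f_k`, with unbounded ramification. Hence the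
remaining children form an arc, and all ports of `β` are chained together.

A point lying in two children of a copy is the image of a main node, and for such points bounded
ramification bounds `c_m(x)`, which increases whenever `x` lies in two children of a copy; so
from some level on `x` lies in a single child. There stability gives a grandchild `F_{βjp}`
avoiding `x` that meets `∂F_{βj}`, hence an avoiding sibling `F_{β(j±1)}`, which chains the ports
of `βj` to those of `β`. Below that level, follow a main node shared by `F_{βj}` and an avoiding
sibling down into `F_{βj}` until the copy containing it avoids `x`: this chains the ports of a
descendant of `βj` to those of `β`, and induction on the distance to that level closes the gap.
Finally every avoiding copy is chained to a port of its longest prefix containing `x`.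
-/

open Set Topology Metric Bornology

noncomputable section

/-- Euclidean space `ℝ^d`. -/
abbrev Euc (d : ℕ) := EuclideanSpace ℝ (Fin d)

/-- A fractal necklace in `ℝ^d`: the attractor `F` of a necklace IFS `f_1, …, f_n`
(`n ≥ 3`) of contractive homeomorphisms of `ℝ^d`, where cyclically adjacent 1-level
copies meet in a single point (a main node `z k`) and non-adjacent copies are disjoint. -/
structure Necklace (d : ℕ) where
  n : ℕ
  hn : 3 ≤ n
  f : Fin n → (Euc d ≃ₜ Euc d)
  contr : ∀ k, ∃ c : NNReal, c < 1 ∧ LipschitzWith c (f k)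
  F : Set (Euc d)
  Fne : F.Nonempty
  Fcpt : IsCompact F
  Fattr : F = ⋃ k, (f k) '' F
  z : Fin n → Euc d
  hz : ∀ k : Fin n, (f k) '' F ∩ (f (k + ⟨1, by omega⟩)) '' F = {z k}
  hdisj : ∀ m k : Fin n, m ≠ k → m ≠ k + ⟨1, by omega⟩ → k ≠ m + ⟨1, by omega⟩ →
    (f m) '' F ∩ (f k) '' F = ∅

namespace Necklace

variable {d : ℕ}

/-- The digit `1` of `Fin n`. -/
def one (N : Necklace d) : Fin N.n := ⟨1, by have := N.hn; omega⟩

/-- The homeomorphism `f_σ = f_{i₁} ∘ ⋯ ∘ f_{i_m}` associated to a word `σ = i₁⋯i_m`. -/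
def word (N : Necklace d) : List (Fin N.n) → (Euc d ≃ₜ Euc d)
  | [] => Homeomorph.refl _
  | i :: s => (N.word s).trans (N.f i)

/-- The copy `F_σ = f_σ(F)` of the necklace. -/
def copy (N : Necklace d) (σ : List (Fin N.n)) : Set (Euc d) := N.word σ '' N.F

/-- `c_m(x)`: the number of words `σ` of length `m` with `x ∈ F_σ`. -/
def cnt (N : Necklace d) (m : ℕ) (x : Euc d) : ℕ :=
  Set.ncard {σ : List (Fin N.n) | σ.length = m ∧ x ∈ N.copy σ}

/-- The boundary `∂_F F_k = {z_{k-1}, z_k}` of the 1-level copy `F_k` in `F`. -/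
def bdry (N : Necklace d) (k : Fin N.n) : Set (Euc d) := {N.z (k - N.one), N.z k}

/-- A necklace is stable if for each `k` at least two second-level copies `F_{kj}`
meet `∂_F F_k`. -/
def Stable (N : Necklace d) : Prop :=
  ∀ k : Fin N.n,
    2 ≤ Set.ncard {A : Set (Euc d) |
      (∃ j : Fin N.n, A = N.f k '' (N.f j '' N.F)) ∧ (A ∩ N.bdry k).Nonempty}

/-- A necklace is good if `∂_F F_k` is not contained in any second-level copy `F_{kj}`. -/
def Good (N : Necklace d) : Prop :=
  ∀ k j : Fin N.n, ¬ (N.bdry k ⊆ N.f k '' (N.f j '' N.F))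

/-- A necklace is of bounded ramification if `{c_m(z_k)}_m` is bounded for each `k`. -/
def BoundedRamification (N : Necklace d) : Prop :=
  ∀ k : Fin N.n, ∃ C : ℕ, ∀ m : ℕ, N.cnt m (N.z k) ≤ C

/-- `M_F`: the set of points that are main nodes of some copy of `F`. -/
def MF (N : Necklace d) : Set (Euc d) :=
  {x | ∃ (σ : List (Fin N.n)) (k : Fin N.n), x = N.word σ (N.z k)}

/-- A necklace has no cut points if `F \ {x}` is connected for every `x ∈ F`. -/
def NoCutPoints (N : Necklace d) : Prop :=
  ∀ x ∈ N.F, IsConnected (N.F \ {x})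

/-- Property I: each 1-level copy `F_k` has an arc from `z_{k-1}` to `z_k` passing
through at least two main nodes of `F_k`. -/
def PropertyI (N : Necklace d) : Prop :=
  ∀ k : Fin N.n, ∃ γ : Path (N.z (k - N.one)) (N.z k),
    Function.Injective γ ∧ (∀ t, γ t ∈ N.f k '' N.F) ∧
    ∃ p q : Euc d, p ≠ q ∧ (∃ j, p = N.f k (N.z j)) ∧ (∃ j, q = N.f k (N.z j)) ∧
      p ∈ Set.range γ ∧ q ∈ Set.range γ

/-- A necklace is self-similar if the maps of its NIFS are (contractive) similitudes. -/
def SelfSimilar (N : Necklace d) : Prop :=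
  ∀ k : Fin N.n, ∃ c : ℝ, 0 < c ∧ c < 1 ∧ ∀ x y, dist (N.f k x) (N.f k y) = c * dist x y

/-- The open set condition for the NIFS of a necklace. -/
def OSC (N : Necklace d) : Prop :=
  ∃ V : Set (Euc d), V.Nonempty ∧ IsOpen V ∧ IsBounded V ∧
    (∀ k, N.f k '' V ⊆ V) ∧ ∀ j k : Fin N.n, j ≠ k → N.f j '' V ∩ N.f k '' V = ∅

end Necklace

open Relation

namespace Fin

open Fin.NatCast Fin.CommRing

variable {n : ℕ} [NeZero n]

theorem reflTransGen_of_forall_add_one {r : Fin n → Fin n → Prop} (h : ∀ i, r i (i + 1))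
    (i j : Fin n) : ReflTransGen r i j := by
  have key : ∀ k : ℕ, ReflTransGen r i (i + k) := by
    intro k
    induction k with
    | zero => simpa using ReflTransGen.refl
    | succ k ih => exact ih.tail (by simpa [add_assoc] using h (i + k))
  simpa using key (j - i).val

theorem one_ne_zero_of_three_le (hn : 3 ≤ n) : (1 : Fin n) ≠ 0 := by
  simp [Fin.ext_iff, Nat.mod_eq_of_lt (by omega : 1 < n)]

theorem two_ne_zero_of_three_le (hn : 3 ≤ n) : (2 : Fin n) ≠ 0 := by
  simp [Fin.ext_iff, Nat.mod_eq_of_lt (by omega : 2 < n)]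

theorem reflTransGen_of_compl_subset_pair (hn : 3 ≤ n) {r : Fin n → Fin n → Prop} [Std.Symm r]
    {A : Set (Fin n)} {t : Fin n} (hA : Aᶜ ⊆ {t, t + 1})
    (hstep : ∀ j ∈ A, j + 1 ∈ A → r j (j + 1)) {i j : Fin n} (hi : i ∈ A) (hj : j ∈ A) :
    ReflTransGen r i j := by
  have hlast : t - 1 ∈ A := by
    by_contra h
    obtain h | h : t - 1 = t ∨ t - 1 = t + 1 := hA h
    · exact one_ne_zero_of_three_le hn (by linear_combination -h)
    · exact two_ne_zero_of_three_le hn (by linear_combination -h)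
  suffices ∀ i ∈ A, ReflTransGen r i (t - 1) from
    (this i hi).trans (Std.Symm.symm _ _ (this j hj))
  intro i hi
  by_cases hit : i = t
  · have hedge := hstep _ hlast (by rwa [sub_add_cancel, ← hit])
    rw [sub_add_cancel] at hedge
    rw [hit]
    exact .single (Std.Symm.symm _ _ hedge)
  induction h : (t - 1 - i).val generalizing i with
  | zero => rw [Fin.val_eq_zero_iff, sub_eq_zero] at h; rw [h]
  | succ k ih =>
    have hne : t - 1 - i ≠ 0 := fun h' => by simp [h'] at h
    have hi₁ : i + 1 ≠ t := fun h' => hne (by rw [← h']; ring)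
    have hi₂ : i + 1 ∈ A := by
      by_contra h'
      obtain h' | h' : i + 1 = t ∨ i + 1 = t + 1 := hA h'
      exacts [hi₁ h', hit (add_right_cancel h')]
    refine .head (hstep i hi hi₂) (ih (i + 1) hi₂ hi₁ ?_)
    rw [show t - 1 - (i + 1) = t - 1 - i - 1 by ring, Fin.val_sub_one_of_ne_zero hne, h]; rfl

theorem eq_sub_one_or_eq_or_eq_add_one (h : (3 : Fin n) = 0)
    (j k : Fin n) : k = j - 1 ∨ k = j ∨ k = j + 1 := by
  have h3 : n ∣ 3 := Fin.natCast_eq_zero.mp (by simpa using h)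
  obtain rfl | rfl := (Nat.dvd_prime Nat.prime_three).mp h3
  · exact .inr (.inl (Subsingleton.elim _ _))
  · clear h h3
    fin_cases j <;> fin_cases k <;> simp
    rfl

end Fin

theorem IsCompact.isPreconnected_of_forall_edist_chain {X : Type*} [PseudoEMetricSpace X]
    {K : Set X} (hK : IsCompact K)
    (h : ∀ ε > 0, ∀ a ∈ K, ∀ b ∈ K,
      ReflTransGen (fun p q => q ∈ K ∧ edist p q < ε) a b) :
    IsPreconnected K := by
  intro U V hU hV hUV ⟨a, haK, haU⟩ ⟨b, hbK, hbV⟩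
  by_contra hdisj
  obtain ⟨δ, hδ, hball⟩ := lebesgue_number_lemma_of_emetric (c := fun i : Bool => cond i U V)
    hK (by simp [hU, hV]) (by rwa [← Set.union_eq_iUnion])
  have stay : ∀ p q, p ∈ K → p ∈ U → edist p q < δ → q ∈ U := by
    intro p q hpK hpU hpq
    obtain ⟨i, hi⟩ := hball p hpK
    cases i
    · exact absurd ⟨p, hpK, hpU, hi (mem_eball_self hδ)⟩ hdisj
    · exact hi (mem_eball'.mpr hpq)
  have hbU : b ∈ U := by
    have : ∀ q, ReflTransGen (fun p q => q ∈ K ∧ edist p q < δ) a q → q ∈ K ∧ q ∈ U := by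
      intro q hq
      induction hq with
      | refl => exact ⟨haK, haU⟩
      | tail _ hpq ih => exact ⟨hpq.1, stay _ _ ih.1 ih.2 hpq.2⟩
    exact (this b (h δ hδ a haK b hbK)).2
  exact hdisj ⟨b, hbK, hbU, hbV⟩

namespace Necklace

open Fin.CommRing

variable {d : ℕ} (N : Necklace d)

instance : NeZero N.n := ⟨by have := N.hn; omega⟩

theorem one_eq : N.one = 1 :=
  Fin.ext (by simp [one, Nat.mod_eq_of_lt (by have := N.hn; omega : 1 < N.n)])

theorem add_one_ne (j : Fin N.n) : j + 1 ≠ j := by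
  simpa using Fin.one_ne_zero_of_three_le N.hn

theorem sub_one_ne (j : Fin N.n) : j - 1 ≠ j := by
  simpa using (Fin.one_ne_zero_of_three_le N.hn).symm

theorem sub_one_ne_add_one (j : Fin N.n) : j - 1 ≠ j + 1 :=
  fun h => Fin.two_ne_zero_of_three_le N.hn (by linear_combination -h)

theorem image_inter_image_add_one (k : Fin N.n) :
    N.f k '' N.F ∩ N.f (k + 1) '' N.F = {N.z k} := by
  have h := N.hz k
  change _ ∩ N.f (k + N.one) '' N.F = _ at h
  rwa [N.one_eq] at h

theorem image_inter_image_eq_empty {m k : Fin N.n} (h₁ : m ≠ k) (h₂ : m ≠ k + 1)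
    (h₃ : k ≠ m + 1) : N.f m '' N.F ∩ N.f k '' N.F = ∅ := by
  rw [← N.one_eq] at h₂ h₃
  exact N.hdisj m k h₁ h₂ h₃

theorem bdry_eq (k : Fin N.n) : N.bdry k = {N.z (k - 1), N.z k} := by
  rw [bdry, one_eq]

theorem word_append (s t : List (Fin N.n)) (y : Euc d) :
    N.word (s ++ t) y = N.word s (N.word t y) := by
  induction s with
  | nil => rfl
  | cons i s ih => exact congrArg (N.f i) ih

@[simp]
theorem copy_nil : N.copy [] = N.F := Set.image_id _

theorem copy_cons (i : Fin N.n) (s : List (Fin N.n)) :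
    N.copy (i :: s) = N.f i '' N.copy s :=
  Set.image_comp (N.f i) (N.word s) N.F

theorem copy_singleton (i : Fin N.n) : N.copy [i] = N.f i '' N.F := by
  rw [copy_cons, copy_nil]

theorem copy_append (s t : List (Fin N.n)) : N.copy (s ++ t) = N.word s '' N.copy t := by
  rw [copy, copy, ← Set.image_comp]
  exact Set.image_congr fun y _ => N.word_append s t y

theorem copy_append_singleton (s : List (Fin N.n)) (j : Fin N.n) :
    N.copy (s ++ [j]) = N.word s '' (N.f j '' N.F) := by
  rw [copy_append, copy_cons, copy_nil]

theorem image_subset_F (k : Fin N.n) : N.f k '' N.F ⊆ N.F := by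
  conv_rhs => rw [N.Fattr]
  exact Set.subset_iUnion_of_subset k le_rfl

theorem copy_subset_F (σ : List (Fin N.n)) : N.copy σ ⊆ N.F := by
  induction σ with
  | nil => rw [copy_nil]
  | cons i s ih => rw [copy_cons]; exact (Set.image_mono ih).trans (N.image_subset_F i)

theorem copy_append_subset (s t : List (Fin N.n)) : N.copy (s ++ t) ⊆ N.copy s := by
  rw [copy_append]
  exact Set.image_mono (N.copy_subset_F t)

theorem copy_nonempty (σ : List (Fin N.n)) : (N.copy σ).Nonempty := N.Fne.image _

theorem exists_mem_copy_append_singleton {y : Euc d} {β : List (Fin N.n)} (hy : y ∈ N.copy β) :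
    ∃ j, y ∈ N.copy (β ++ [j]) := by
  obtain ⟨w, hw, rfl⟩ := hy
  rw [N.Fattr] at hw
  obtain ⟨j, hj⟩ := Set.mem_iUnion.mp hw
  exact ⟨j, by rw [copy_append_singleton]; exact Set.mem_image_of_mem _ hj⟩

theorem exists_mem_copy_of_length {y : Euc d} (hy : y ∈ N.F) (m : ℕ) :
    ∃ σ : List (Fin N.n), σ.length = m ∧ y ∈ N.copy σ := by
  induction m with
  | zero => exact ⟨[], rfl, by rwa [copy_nil]⟩
  | succ m ih =>
    obtain ⟨σ, hσ, hyσ⟩ := ih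
    obtain ⟨j, hj⟩ := N.exists_mem_copy_append_singleton hyσ
    exact ⟨σ ++ [j], by simp [hσ], hj⟩

theorem word_z_mem_copy (β : List (Fin N.n)) (a : Fin N.n) :
    N.word β (N.z a) ∈ N.copy (β ++ [a]) ∧ N.word β (N.z a) ∈ N.copy (β ++ [a + 1]) := by
  have h : N.z a ∈ N.f a '' N.F ∩ N.f (a + 1) '' N.F := by
    rw [image_inter_image_add_one]; rfl
  rw [copy_append_singleton, copy_append_singleton]
  exact ⟨Set.mem_image_of_mem _ h.1, Set.mem_image_of_mem _ h.2⟩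

theorem z_mem_F (k : Fin N.n) : N.z k ∈ N.F := N.copy_subset_F _ (N.word_z_mem_copy [] k).1

theorem eq_word_z_of_mem_copy {θ : List (Fin N.n)} {u v : Fin N.n} {x : Euc d} (huv : u ≠ v)
    (hu : x ∈ N.copy (θ ++ [u])) (hv : x ∈ N.copy (θ ++ [v])) :
    (v = u + 1 ∧ x = N.word θ (N.z u)) ∨ (u = v + 1 ∧ x = N.word θ (N.z v)) := by
  have hx : x ∈ N.word θ '' (N.f u '' N.F ∩ N.f v '' N.F) := by
    rw [Set.image_inter (N.word θ).injective, ← copy_append_singleton, ← copy_append_singleton]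
    exact ⟨hu, hv⟩
  by_cases h₂ : v = u + 1
  · rw [h₂, image_inter_image_add_one, Set.image_singleton] at hx
    exact .inl ⟨h₂, hx⟩
  by_cases h₃ : u = v + 1
  · rw [Set.inter_comm, h₃, image_inter_image_add_one, Set.image_singleton] at hx
    exact .inr ⟨h₃, hx⟩
  rw [N.image_inter_image_eq_empty huv h₃ h₂, Set.image_empty] at hx
  exact hx.elim

theorem exists_lipschitzWith_lt_one :
    ∃ c : NNReal, c < 1 ∧ ∀ k, LipschitzWith c (N.f k) := by
  choose c hc₁ hc using N.contr
  refine ⟨Finset.univ.sup c, ?_, fun k => (hc k).weaken (Finset.le_sup (Finset.mem_univ k))⟩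
  exact (Finset.sup_lt_iff (by simp)).mpr fun k _ => hc₁ k

theorem ediam_copy_le {c : NNReal} (hc : ∀ k, LipschitzWith c (N.f k)) (σ : List (Fin N.n)) :
    ediam (N.copy σ) ≤ c ^ σ.length * ediam N.F := by
  induction σ with
  | nil => simp
  | cons i s ih =>
    rw [copy_cons, List.length_cons, pow_succ', mul_assoc]
    exact ((hc i).ediam_image_le _).trans (by gcongr)

theorem exists_ediam_copy_lt {ε : ENNReal} (hε : 0 < ε) :
    ∃ m, ∀ σ : List (Fin N.n), m ≤ σ.length → ediam (N.copy σ) < ε := by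
  obtain ⟨c, hc₁, hc⟩ := N.exists_lipschitzWith_lt_one
  have hlim : Filter.Tendsto (fun m => (c : ENNReal) ^ m * ediam N.F) Filter.atTop (𝓝 0) := by
    simpa using ENNReal.Tendsto.mul_const
      (ENNReal.tendsto_pow_atTop_nhds_zero_of_lt_one (by exact_mod_cast hc₁))
      (Or.inr N.Fcpt.isBounded.ediam_ne_top)
  obtain ⟨m, hm⟩ := Filter.eventually_atTop.mp (hlim.eventually_lt_const hε)
  exact ⟨m, fun σ hσ => (N.ediam_copy_le hc σ).trans_lt (hm σ.length hσ)⟩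

theorem exists_notMem_copy_of_ne {p q : Euc d} (hpq : p ≠ q) :
    ∃ m, ∀ σ : List (Fin N.n), m ≤ σ.length → p ∈ N.copy σ → q ∉ N.copy σ := by
  obtain ⟨m, hm⟩ := N.exists_ediam_copy_lt (edist_pos.mpr hpq)
  exact ⟨m, fun σ hσ hp hq => (edist_le_ediam_of_mem hp hq).not_gt (hm σ hσ)⟩

def InCommonCopy (m : ℕ) (p q : Euc d) : Prop :=
  ∃ σ : List (Fin N.n), σ.length = m ∧ p ∈ N.copy σ ∧ q ∈ N.copy σ

theorem reflTransGen_inCommonCopy (m : ℕ) {a b : Euc d} (ha : a ∈ N.F) (hb : b ∈ N.F) :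
    ReflTransGen (N.InCommonCopy m) a b := by
  induction m generalizing a b with
  | zero => exact .single ⟨[], rfl, by rwa [copy_nil], by rwa [copy_nil]⟩
  | succ m ih =>
    have within (i : Fin N.n) {a b : Euc d} (ha : a ∈ N.f i '' N.F) (hb : b ∈ N.f i '' N.F) :
        ReflTransGen (N.InCommonCopy (m + 1)) a b := by
      obtain ⟨a, ha, rfl⟩ := ha
      obtain ⟨b, hb, rfl⟩ := hb
      refine ReflTransGen.lift (N.f i) (fun p q ⟨σ, hσ, hp, hq⟩ => ?_) _ _ (ih ha hb)
      exact ⟨i :: σ, by simp [hσ], by rw [copy_cons]; exact Set.mem_image_of_mem _ hp,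
        by rw [copy_cons]; exact Set.mem_image_of_mem _ hq⟩
    have across (i j : Fin N.n) : ∀ a ∈ N.f i '' N.F, ∀ b ∈ N.f j '' N.F,
        ReflTransGen (N.InCommonCopy (m + 1)) a b := by
      induction Fin.reflTransGen_of_forall_add_one (r := fun i j => j = i + 1) (fun _ => rfl) i j
        with
      | refl => exact fun a ha b hb => within _ ha hb
      | @tail j _ _ hj ih =>
        subst hj
        have hz := (N.image_inter_image_add_one j).ge rfl
        exact fun a ha b hb => (ih a ha _ hz.1).trans (within _ hz.2 hb)
    rw [N.Fattr, Set.mem_iUnion] at ha hb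
    exact across _ _ _ ha.choose_spec _ hb.choose_spec

theorem isPreconnected_F : IsPreconnected N.F := by
  refine N.Fcpt.isPreconnected_of_forall_edist_chain fun ε hε a ha b hb => ?_
  obtain ⟨m, hm⟩ := N.exists_ediam_copy_lt hε
  refine ReflTransGen.mono (fun p q ⟨σ, hσ, hp, hq⟩ => ?_) _ _
    (N.reflTransGen_inCommonCopy m ha hb)
  exact ⟨N.copy_subset_F σ hq, (edist_le_ediam_of_mem hp hq).trans_lt (hm σ hσ.ge)⟩

theorem isConnected_copy (σ : List (Fin N.n)) : IsConnected (N.copy σ) :=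
  ⟨N.copy_nonempty σ, N.isPreconnected_F.image _ (N.word σ).continuous.continuousOn⟩

def Unbranched (x : Euc d) (β : List (Fin N.n)) : Prop :=
  ∀ j j', x ∈ N.copy (β ++ [j]) → x ∈ N.copy (β ++ [j']) → j = j'

def EventuallyUnbranched (x : Euc d) : Prop :=
  ∃ M, ∀ β : List (Fin N.n), M ≤ β.length → N.Unbranched x β

theorem finite_setOf_mem_copy (x : Euc d) (m : ℕ) :
    {σ : List (Fin N.n) | σ.length = m ∧ x ∈ N.copy σ}.Finite :=
  (List.finite_length_eq (Fin N.n) m).subset fun _ h => h.1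

theorem cnt_zero_le_one (x : Euc d) : N.cnt 0 x ≤ 1 := by
  refine (Set.ncard_le_ncard (t := {[]}) ?_).trans (Set.ncard_singleton _).le
  exact fun σ h => List.length_eq_zero_iff.mp h.1

theorem cnt_succ_f_le {i : Fin N.n} {y : Euc d} (hy : ∀ j ≠ i, N.f i y ∉ N.f j '' N.F)
    (m : ℕ) : N.cnt (m + 1) (N.f i y) ≤ N.cnt m y := by
  have hfin := N.finite_setOf_mem_copy y m
  refine (Set.ncard_le_ncard (t := List.cons i '' {σ | σ.length = m ∧ y ∈ N.copy σ}) ?_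
    (hfin.image _)).trans (Set.ncard_image_le hfin)
  rintro (_ | ⟨j, σ⟩) ⟨hlen, hmem⟩
  · simp at hlen
  rw [copy_cons] at hmem
  obtain rfl : j = i := by
    by_contra hji
    exact hy j hji (Set.image_mono (N.copy_subset_F σ) hmem)
  exact ⟨σ, ⟨by simpa using hlen, (N.f j).injective.mem_set_image.mp hmem⟩, rfl⟩

theorem exists_cnt_word_z_le (hbr : N.BoundedRamification) (θ : List (Fin N.n)) (a : Fin N.n) :
    ∃ C, ∀ m, N.cnt m (N.word θ (N.z a)) ≤ C := by
  induction θ with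
  | nil => exact hbr a
  | cons i θ ih =>
    obtain ⟨C, hC⟩ := ih
    -- either `f_i y` is a main node, or every copy containing it starts with `i`
    by_cases hnode : ∃ j ≠ i, N.f i (N.word θ (N.z a)) ∈ N.f j '' N.F
    · obtain ⟨j, hji, hj⟩ := hnode
      have hy : N.word θ (N.z a) ∈ N.F := N.copy_subset_F _ (N.word_z_mem_copy θ a).1
      have hi : N.f i (N.word θ (N.z a)) ∈ N.copy [i] := by
        rw [copy_singleton]; exact Set.mem_image_of_mem _ hy
      rw [← copy_singleton] at hj
      obtain ⟨-, h⟩ | ⟨-, h⟩ := N.eq_word_z_of_mem_copy (θ := []) hji.symm hi hj <;>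
      · change N.word (i :: θ) (N.z a) = _ at h
        rw [h]; exact hbr _
    · refine ⟨max C 1, fun m => ?_⟩
      cases m with
      | zero => exact (N.cnt_zero_le_one _).trans (le_max_right _ _)
      | succ m =>
        refine (N.cnt_succ_f_le (fun j hji hj => hnode ⟨j, hji, hj⟩) m).trans ?_
        exact (hC m).trans (le_max_left _ _)

theorem cnt_le_ncard_image_dropLast (x : Euc d) (m : ℕ) :
    N.cnt m x ≤
      (List.dropLast '' {σ : List (Fin N.n) | σ.length = m + 1 ∧ x ∈ N.copy σ}).ncard := by
  refine Set.ncard_le_ncard (fun β ⟨hlen, hxβ⟩ => ?_) ((N.finite_setOf_mem_copy x _).image _)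
  obtain ⟨j, hj⟩ := N.exists_mem_copy_append_singleton hxβ
  exact ⟨β ++ [j], ⟨by simp [hlen], hj⟩, List.dropLast_concat⟩

theorem cnt_le_cnt_succ (x : Euc d) (m : ℕ) : N.cnt m x ≤ N.cnt (m + 1) x :=
  (N.cnt_le_ncard_image_dropLast x m).trans (Set.ncard_image_le (N.finite_setOf_mem_copy x _))

theorem cnt_lt_cnt_succ {x : Euc d} {β : List (Fin N.n)} {j j' : Fin N.n}
    (hj : x ∈ N.copy (β ++ [j])) (hj' : x ∈ N.copy (β ++ [j'])) (hjj' : j ≠ j') :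
    N.cnt β.length x < N.cnt (β.length + 1) x := by
  refine (N.cnt_le_ncard_image_dropLast x _).trans_lt
    ((Set.ncard_image_le (N.finite_setOf_mem_copy x _)).lt_of_ne fun h => hjj' ?_)
  have hinj := Set.injOn_of_ncard_image_eq h (N.finite_setOf_mem_copy x _)
  have := hinj ⟨by simp, hj⟩ ⟨by simp, hj'⟩ (by simp)
  simpa using this

theorem eventuallyUnbranched_of_boundedRamification (hbr : N.BoundedRamification) (x : Euc d) :
    N.EventuallyUnbranched x := by
  by_cases hnode : ∃ θ a, x = N.word θ (N.z a)
  · obtain ⟨θ, a, hx⟩ := hnode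
    obtain ⟨C, hC⟩ := hx ▸ N.exists_cnt_word_z_le hbr θ a
    by_contra hbranch
    simp only [EventuallyUnbranched, Unbranched, not_exists, not_forall] at hbranch
    have grow (t : ℕ) : ∃ m, t ≤ N.cnt m x := by
      induction t with
      | zero => exact ⟨0, Nat.zero_le _⟩
      | succ t ih =>
        obtain ⟨m, hm⟩ := ih
        obtain ⟨β, hβ, j, j', hj, hj', hjj'⟩ := hbranch m
        refine ⟨β.length + 1, ?_⟩
        have : N.cnt m x ≤ N.cnt β.length x :=
          monotone_nat_of_le_succ (f := fun m => N.cnt m x) (N.cnt_le_cnt_succ x) hβ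
        have := N.cnt_lt_cnt_succ hj hj' hjj'
        omega
    obtain ⟨m, hm⟩ := grow (C + 1)
    exact absurd (hC m) (by omega)
  · refine ⟨0, fun β _ j j' hj hj' => by_contra fun hjj' => hnode ?_⟩
    obtain ⟨-, h⟩ | ⟨-, h⟩ := N.eq_word_z_of_mem_copy hjj' hj hj' <;> exact ⟨_, _, h⟩

theorem exists_ne_of_stable (hs : N.Stable) (k : Fin N.n) :
    ∃ j₁ j₂, j₁ ≠ j₂ ∧ (N.copy [k, j₁] ∩ N.bdry k).Nonempty ∧
      (N.copy [k, j₂] ∩ N.bdry k).Nonempty := by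
  obtain ⟨A, ⟨⟨j₁, rfl⟩, hA⟩, B, ⟨⟨j₂, rfl⟩, hB⟩, hAB⟩ :=
    (Set.one_lt_ncard_iff_nontrivial_and_finite.mp (hs k)).1
  refine ⟨j₁, j₂, fun h => hAB (h ▸ rfl), ?_, ?_⟩ <;> rwa [copy_cons, copy_singleton]

theorem f_eq_self_of_forall_z_eq (hs : N.Stable) {p : Euc d} (hp : ∀ k, N.z k = p)
    (k : Fin N.n) : N.f k p = p := by
  obtain ⟨j₁, j₂, hj, ⟨_, hy₁, hb₁⟩, ⟨_, hy₂, hb₂⟩⟩ := N.exists_ne_of_stable hs k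
  have hbdry : N.bdry k = {p} := by rw [bdry_eq, hp, hp, Set.pair_eq_singleton]
  rw [copy_cons, copy_singleton] at hy₁ hy₂
  obtain ⟨q, hq₁, rfl⟩ := hy₁
  obtain ⟨q', hq₂, rfl⟩ := hy₂
  rw [hbdry, Set.mem_singleton_iff] at hb₁ hb₂
  obtain rfl : q = q' := (N.f k).injective (hb₁.trans hb₂.symm)
  rw [← copy_singleton] at hq₁ hq₂
  obtain ⟨-, h⟩ | ⟨-, h⟩ := N.eq_word_z_of_mem_copy (θ := []) hj hq₁ hq₂ <;>
  · change q = N.z _ at h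
    rwa [h, hp] at hb₁

theorem not_eventuallyUnbranched_word_of_forall_f_eq {p : Euc d} (hp : p ∈ N.F)
    (hfix : ∀ k, N.f k p = p) (β : List (Fin N.n)) : ¬ N.EventuallyUnbranched (N.word β p) := by
  have hword (σ : List (Fin N.n)) : N.word σ p = p := by
    induction σ with
    | nil => rfl
    | cons i σ ih => exact (congrArg (N.f i) ih).trans (hfix i)
  have hmem (σ : List (Fin N.n)) : N.word β p ∈ N.copy (β ++ σ) := by
    rw [copy_append]; exact Set.mem_image_of_mem _ ⟨p, hp, hword σ⟩
  rintro ⟨M, hM⟩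
  refine Fin.one_ne_zero_of_three_le N.hn (hM (β ++ List.replicate M 0) (by simp) 1 0 ?_ ?_) <;>
  · rw [List.append_assoc]; exact hmem _

theorem not_mem_three_consecutive_copies (hs : N.Stable) {x : Euc d} (hx : N.EventuallyUnbranched x)
    (β : List (Fin N.n)) (j : Fin N.n) :
    ¬ (x ∈ N.copy (β ++ [j - 1]) ∧ x ∈ N.copy (β ++ [j]) ∧ x ∈ N.copy (β ++ [j + 1])) := by
  rintro ⟨h₁, h₂, h₃⟩
  have e₁ : x = N.word β (N.z (j - 1)) := by
    obtain ⟨-, h⟩ | ⟨h, -⟩ := N.eq_word_z_of_mem_copy (N.sub_one_ne j) h₁ h₂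
    · exact h
    · exact absurd h (N.sub_one_ne_add_one j)
  have e₂ : x = N.word β (N.z j) := by
    obtain ⟨-, h⟩ | ⟨h, -⟩ := N.eq_word_z_of_mem_copy (N.add_one_ne j).symm h₂ h₃
    · exact h
    · exact absurd (by linear_combination -h) (Fin.two_ne_zero_of_three_le N.hn)
  obtain ⟨h, -⟩ | ⟨h3, e₃⟩ := N.eq_word_z_of_mem_copy (N.sub_one_ne_add_one j) h₁ h₃
  · exact N.add_one_ne j (by linear_combination h)
  have h3 : (3 : Fin N.n) = 0 := by linear_combination -h3
  have hz (k : Fin N.n) : N.z k = N.z j := by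
    obtain rfl | rfl | rfl := Fin.eq_sub_one_or_eq_or_eq_add_one h3 j k
    · exact (N.word β).injective (e₁.symm.trans e₂)
    · rfl
    · exact (N.word β).injective (e₃.symm.trans e₂)
  exact N.not_eventuallyUnbranched_word_of_forall_f_eq (N.z_mem_F j)
    (N.f_eq_self_of_forall_z_eq hs hz) β (e₂ ▸ hx)

theorem exists_forall_mem_copy_append_eq_or_eq_add_one (hs : N.Stable) {x : Euc d}
    (hx : N.EventuallyUnbranched x) {β : List (Fin N.n)} (hxβ : x ∈ N.copy β) :
    ∃ t, ∀ u, x ∈ N.copy (β ++ [u]) → u = t ∨ u = t + 1 := by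
  obtain ⟨t, ht⟩ := N.exists_mem_copy_append_singleton hxβ
  by_cases ht' : x ∈ N.copy (β ++ [t + 1])
  · refine ⟨t, fun u hu => ?_⟩
    by_contra! hne
    obtain ⟨h, -⟩ | ⟨h, -⟩ := N.eq_word_z_of_mem_copy hne.1.symm ht hu
    · exact hne.2 h
    · exact N.not_mem_three_consecutive_copies hs hx β t ⟨by rwa [h, add_sub_cancel_right], ht, ht'⟩
  · refine ⟨t - 1, fun u hu => ?_⟩
    rw [sub_add_cancel]
    by_cases hut : u = t
    · exact .inr hut
    obtain ⟨h, -⟩ | ⟨h, -⟩ := N.eq_word_z_of_mem_copy (Ne.symm hut) ht hu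
    · exact absurd (h ▸ hu) ht'
    · exact .inl (by rw [h, add_sub_cancel_right])

def AdjAvoiding (x : Euc d) (σ τ : List (Fin N.n)) : Prop :=
  x ∉ N.copy σ ∧ x ∉ N.copy τ ∧ (N.copy σ ∩ N.copy τ).Nonempty

instance (x : Euc d) : Std.Symm (N.AdjAvoiding x) :=
  ⟨fun _ _ ⟨h₁, h₂, h⟩ => ⟨h₂, h₁, Set.inter_comm _ _ ▸ h⟩⟩

abbrev Linked (x : Euc d) : List (Fin N.n) → List (Fin N.n) → Prop :=
  ReflTransGen (N.AdjAvoiding x)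

def PortsLinked (x : Euc d) (β β' : List (Fin N.n)) : Prop :=
  ∀ j j', x ∉ N.copy (β ++ [j]) → x ∉ N.copy (β' ++ [j']) → N.Linked x (β ++ [j]) (β' ++ [j'])

theorem exists_notMem_copy_append_singleton (hs : N.Stable) {x : Euc d}
    (hx : N.EventuallyUnbranched x) {β : List (Fin N.n)} (hxβ : x ∈ N.copy β) :
    ∃ j, x ∉ N.copy (β ++ [j]) := by
  obtain ⟨t, ht⟩ := N.exists_forall_mem_copy_append_eq_or_eq_add_one hs hx hxβ
  refine ⟨t - 1, fun h => ?_⟩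
  obtain h | h := ht _ h
  exacts [N.sub_one_ne t h, N.sub_one_ne_add_one t h]

theorem portsLinked_self (hs : N.Stable) {x : Euc d} (hx : N.EventuallyUnbranched x)
    {β : List (Fin N.n)} (hxβ : x ∈ N.copy β) : N.PortsLinked x β β := by
  obtain ⟨t, ht⟩ := N.exists_forall_mem_copy_append_eq_or_eq_add_one hs hx hxβ
  intro j j' hj hj'
  have : Std.Symm fun i k => N.AdjAvoiding x (β ++ [i]) (β ++ [k]) :=
    ⟨fun _ _ h => Std.Symm.symm _ _ h⟩
  refine ReflTransGen.lift (fun i => β ++ [i]) (fun _ _ h => h) _ _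
    (Fin.reflTransGen_of_compl_subset_pair N.hn (A := {i | x ∉ N.copy (β ++ [i])})
      (fun i hi => ht i (not_not.mp hi)) (fun i hi hi' => ?_) hj hj')
  exact ⟨hi, hi', _, N.word_z_mem_copy β i⟩

section

variable {N}

theorem PortsLinked.symm {x : Euc d} {β β' : List (Fin N.n)} (h : N.PortsLinked x β β') :
    N.PortsLinked x β' β :=
  fun j j' hj hj' => Std.Symm.symm _ _ (h j' j hj' hj)

theorem PortsLinked.trans (hs : N.Stable) {x : Euc d} (hx : N.EventuallyUnbranched x)
    {β β' β'' : List (Fin N.n)} (hxβ' : x ∈ N.copy β') (h : N.PortsLinked x β β')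
    (h' : N.PortsLinked x β' β'') : N.PortsLinked x β β'' := by
  obtain ⟨k, hk⟩ := N.exists_notMem_copy_append_singleton hs hx hxβ'
  exact fun j j' hj hj' => (h j k hj hk).trans (h' k j' hk hj')

end

theorem portsLinked_of_adjAvoiding (hs : N.Stable) {x : Euc d} (hx : N.EventuallyUnbranched x)
    {β β' : List (Fin N.n)} (hxβ : x ∈ N.copy β) (hxβ' : x ∈ N.copy β') {k k' : Fin N.n}
    (h : N.AdjAvoiding x (β ++ [k]) (β' ++ [k'])) : N.PortsLinked x β β' :=
  fun j j' hj hj' => ((N.portsLinked_self hs hx hxβ j k hj h.1).tail h).trans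
    (N.portsLinked_self hs hx hxβ' k' j' h.2.1 hj')

theorem portsLinked_append_singleton_of_unbranched (hs : N.Stable) {x : Euc d}
    (hx : N.EventuallyUnbranched x) {β : List (Fin N.n)} {j : Fin N.n}
    (hβ : N.Unbranched x β) (hβj : N.Unbranched x (β ++ [j])) (hxj : x ∈ N.copy (β ++ [j])) :
    N.PortsLinked x (β ++ [j]) β := by
  obtain ⟨j₁, j₂, hj, h₁, h₂⟩ := N.exists_ne_of_stable hs j
  obtain ⟨p, hp, y, hyp, hy⟩ : ∃ p, x ∉ N.copy (β ++ [j] ++ [p]) ∧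
      (N.copy [j, p] ∩ N.bdry j).Nonempty := by
    by_cases hx₁ : x ∈ N.copy (β ++ [j] ++ [j₁])
    · exact ⟨j₂, fun hx₂ => hj (hβj _ _ hx₁ hx₂), h₂⟩
    · exact ⟨j₁, hx₁, h₁⟩
  have hyp' : N.word β y ∈ N.copy (β ++ [j] ++ [p]) := by
    rw [List.append_assoc, copy_append]; exact Set.mem_image_of_mem _ hyp
  have hxβ := N.copy_append_subset β [j] hxj
  rw [bdry_eq] at hy
  obtain rfl | rfl := hy
  · exact N.portsLinked_of_adjAvoiding hs hx hxj hxβ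
      ⟨hp, fun h => N.sub_one_ne j (hβ _ _ h hxj), _, hyp', (N.word_z_mem_copy β (j - 1)).1⟩
  · exact N.portsLinked_of_adjAvoiding hs hx hxj hxβ
      ⟨hp, fun h => N.add_one_ne j (hβ _ _ h hxj), _, hyp', (N.word_z_mem_copy β j).2⟩

theorem exists_sibling_notMem_copy (hs : N.Stable) {x : Euc d} (hx : N.EventuallyUnbranched x)
    {β : List (Fin N.n)} {j : Fin N.n} (hxj : x ∈ N.copy (β ++ [j])) :
    ∃ k q, x ∉ N.copy (β ++ [k]) ∧ q ∈ N.copy (β ++ [k]) ∧ q ∈ N.copy (β ++ [j]) := by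
  by_cases h₁ : x ∈ N.copy (β ++ [j + 1])
  · by_cases h₀ : x ∈ N.copy (β ++ [j - 1])
    · exact (N.not_mem_three_consecutive_copies hs hx β j ⟨h₀, hxj, h₁⟩).elim
    · refine ⟨j - 1, _, h₀, (N.word_z_mem_copy β (j - 1)).1, ?_⟩
      simpa using (N.word_z_mem_copy β (j - 1)).2
  · exact ⟨j + 1, _, h₁, (N.word_z_mem_copy β j).2, (N.word_z_mem_copy β j).1⟩

theorem exists_append_notMem_copy {x q : Euc d} (hqx : q ≠ x) {δ : List (Fin N.n)}
    (hq : q ∈ N.copy δ) (hx : x ∈ N.copy δ) :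
    ∃ γ j, x ∈ N.copy (δ ++ γ) ∧ x ∉ N.copy (δ ++ γ ++ [j]) ∧ q ∈ N.copy (δ ++ γ ++ [j]) := by
  obtain ⟨m, hm⟩ := N.exists_notMem_copy_of_ne hqx
  induction h : m - δ.length generalizing δ with
  | zero => exact absurd hx (hm δ (by omega) hq)
  | succ k ih =>
    obtain ⟨j, hj⟩ := N.exists_mem_copy_append_singleton hq
    by_cases hxj : x ∈ N.copy (δ ++ [j])
    · obtain ⟨γ, j', h⟩ := ih hj hxj (by rw [List.length_append, List.length_singleton]; omega)
      exact ⟨j :: γ, j', by simpa using h⟩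
    · exact ⟨[], j, by simpa using hx, by simpa using hxj, by simpa using hj⟩

theorem exists_portsLinked_append (hs : N.Stable) {x : Euc d} (hx : N.EventuallyUnbranched x)
    {β : List (Fin N.n)} {j : Fin N.n} (hxj : x ∈ N.copy (β ++ [j])) :
    ∃ γ, x ∈ N.copy (β ++ [j] ++ γ) ∧ N.PortsLinked x (β ++ [j] ++ γ) β := by
  obtain ⟨k, q, hk, hqk, hqj⟩ := N.exists_sibling_notMem_copy hs hx hxj
  obtain ⟨γ, j', hxγ, hj', hqj'⟩ :=
    N.exists_append_notMem_copy (by rintro rfl; exact hk hqk) hqj hxj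
  exact ⟨γ, hxγ, N.portsLinked_of_adjAvoiding hs hx hxγ (N.copy_append_subset β [j] hxj)
    ⟨hj', hk, q, hqj', hqk⟩⟩

theorem portsLinked_append_of_forall (hs : N.Stable) {x : Euc d} (hx : N.EventuallyUnbranched x)
    {L : ℕ} (h : ∀ β j, L ≤ β.length → x ∈ N.copy (β ++ [j]) → N.PortsLinked x (β ++ [j]) β)
    {β : List (Fin N.n)} (hβ : L ≤ β.length) (γ : List (Fin N.n)) (hxγ : x ∈ N.copy (β ++ γ)) :
    N.PortsLinked x (β ++ γ) β := by
  induction γ using List.reverseRecOn with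
  | nil => simpa using N.portsLinked_self hs hx (by simpa using hxγ)
  | append_singleton γ j ih =>
    rw [← List.append_assoc] at hxγ ⊢
    have hxγ' := N.copy_append_subset _ [j] hxγ
    exact (h _ j (by rw [List.length_append]; omega) hxγ).trans hs hx hxγ' (ih hxγ')

theorem portsLinked_append_singleton (hs : N.Stable) {x : Euc d} (hx : N.EventuallyUnbranched x)
    {β : List (Fin N.n)} {j : Fin N.n} (hxj : x ∈ N.copy (β ++ [j])) :
    N.PortsLinked x (β ++ [j]) β := by
  obtain ⟨M, hM⟩ := id hx
  suffices ∀ k β j, M ≤ β.length + k → x ∈ N.copy (β ++ [j]) → N.PortsLinked x (β ++ [j]) β from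
    this M β j (by omega) hxj
  intro k
  induction k with
  | zero =>
    intro β j hβ hxj
    exact N.portsLinked_append_singleton_of_unbranched hs hx (hM β (by omega))
      (hM _ (by rw [List.length_append, List.length_singleton]; omega)) hxj
  | succ k ih =>
    intro β j hβ hxj
    obtain ⟨γ, hxγ, hγ⟩ := N.exists_portsLinked_append hs hx hxj
    have hγ' := N.portsLinked_append_of_forall hs hx (L := β.length + 1)
      (fun β' j' hβ' => ih β' j' (by omega)) (β := β ++ [j]) (by simp) γ hxγ
    exact hγ'.symm.trans hs hx hxγ hγ

theorem portsLinked_nil (hs : N.Stable) {x : Euc d} (hx : N.EventuallyUnbranched x)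
    {β : List (Fin N.n)} (hxβ : x ∈ N.copy β) : N.PortsLinked x β [] :=
  N.portsLinked_append_of_forall hs hx (fun _ _ _ => N.portsLinked_append_singleton hs hx)
    (β := []) le_rfl β hxβ

theorem exists_linked_port {x : Euc d} (hxF : x ∈ N.F) {σ : List (Fin N.n)}
    (hσ : x ∉ N.copy σ) :
    ∃ β j, x ∈ N.copy β ∧ x ∉ N.copy (β ++ [j]) ∧ N.Linked x σ (β ++ [j]) := by
  induction σ using List.reverseRecOn with
  | nil => exact absurd (by rwa [copy_nil]) hσ
  | append_singleton β j ih =>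
    by_cases hxβ : x ∈ N.copy β
    · exact ⟨β, j, hxβ, hσ, .refl⟩
    · obtain ⟨β', j', h⟩ := ih hxβ
      refine ⟨β', j', h.1, h.2.1, .head ⟨hσ, hxβ, ?_⟩ h.2.2⟩
      exact (N.copy_nonempty _).mono (Set.subset_inter subset_rfl (N.copy_append_subset β [j]))

theorem linked_of_notMem_copy (hs : N.Stable) (hbr : N.BoundedRamification) {x : Euc d}
    (hxF : x ∈ N.F) {σ τ : List (Fin N.n)} (hσ : x ∉ N.copy σ) (hτ : x ∉ N.copy τ) :
    N.Linked x σ τ := by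
  have hx := N.eventuallyUnbranched_of_boundedRamification hbr x
  obtain ⟨β, j, hxβ, hj, hσβ⟩ := N.exists_linked_port hxF hσ
  obtain ⟨β', j', hxβ', hj', hτβ'⟩ := N.exists_linked_port hxF hτ
  have hββ' := (N.portsLinked_nil hs hx hxβ).trans hs hx (by rwa [copy_nil])
    (N.portsLinked_nil hs hx hxβ').symm
  exact hσβ.trans ((hββ' j j' hj hj').trans (Std.Symm.symm _ _ hτβ'))

theorem diff_singleton_eq_biUnion (x : Euc d) :
    N.F \ {x} = ⋃ σ ∈ {σ : List (Fin N.n) | x ∉ N.copy σ}, N.copy σ := by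
  ext y
  simp only [Set.mem_sdiff, Set.mem_singleton_iff, Set.mem_iUnion, Set.mem_ofPred_eq, exists_prop]
  constructor
  · rintro ⟨hy, hyx⟩
    obtain ⟨m, hm⟩ := N.exists_notMem_copy_of_ne hyx
    obtain ⟨σ, hσ, hyσ⟩ := N.exists_mem_copy_of_length hy m
    exact ⟨σ, hm σ hσ.ge hyσ, hyσ⟩
  · rintro ⟨σ, hσ, hyσ⟩
    exact ⟨N.copy_subset_F σ hyσ, fun h => hσ (h ▸ hyσ)⟩

end Necklace

/-- Every stable necklace of bounded ramification in `ℝ^d` has no cut points. -/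
theorem Necklace.noCutPoints_of_stable_boundedRamification {d : ℕ} (N : Necklace d)
    (hs : N.Stable) (hbr : N.BoundedRamification) : N.NoCutPoints := by
  intro x hxF
  obtain ⟨j, hj⟩ := N.exists_notMem_copy_append_singleton hs (N.eventuallyUnbranched_of_boundedRamification hbr x)
    (by rwa [N.copy_nil] : x ∈ N.copy [])
  rw [N.diff_singleton_eq_biUnion x]
  refine IsConnected.biUnion_of_reflTransGen ⟨_, hj⟩ (fun σ _ => N.isConnected_copy σ)
    fun σ hσ τ hτ => ReflTransGen.mono (fun _ _ h => ⟨h.2.2, h.1⟩) _ _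
      (N.linked_of_notMem_copy hs hbr hxF hσ hτ)
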